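/- arXiv:math/0701746 — 7 statements merged into one kernel-verified Lean document; each statement's English description precedes it below -/
import Mathlib

section
/- Let C be a category, M a class of morphisms, and X₀ → X₁ → X₂ → ⋯ a sequence of morphisms l_n : X_n → X_{n+1}, each of which is left-orthogonal to every morphism of M. If (X, m_n : X_n → X) is a colimit of this sequence, then the morphism m₀ : X₀ → X is left-orthogonal to every morphism of M. -/
open CategoryTheory

theorem sequential_colimit_of_llp {C : Type u} [Category.{v} C] (M : MorphismProperty C)
    (F : ℕ ⥤ C)
    (hF : ∀ (n : ℕ) {A B : C} (g : A ⟶ B), M g →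
      HasLiftingProperty (F.map (homOfLE (Nat.le_succ n))) g)
    (c : Limits.Cocone F) (hc : Limits.IsColimit c)
    {A B : C} (g : A ⟶ B) (hg : M g) :
    HasLiftingProperty (c.ι.app 0) g :=
  -- `ℕ` has no limit elements besides `⊥ = 0`, so `F` is automatically well-order-continuous.
  HasLiftingProperty.transfiniteComposition.hasLiftingProperty_ι_app_bot hc
    fun n _ ↦ hF n g hg
end

section
/- Let h be an idempotent endomorphism of the free monoid M on a set S (h ∘ h = h). If s ∈ S and h(of s) = u * (of s) * v for some u, v ∈ M with h(u) = 1 and h(v) = 1, then h fixes h(of s), i.e. h(h(of s)) = h(of s), and moreover the word h(of s) contains exactly one occurrence of the letter s. -/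
/-! Applying `h` to `h (of s) = u * of s * v` gives `h (h (of s)) = h u * h (of s) * h v = h (of s)`.
A free monoid has no nontrivial factorizations of `1`, so `h u = 1` forces `h` to kill every
letter of `u`, and likewise for `v`; as `h (of s)` contains `s`, the letter `s` occurs in
neither `u` nor `v`, hence exactly once in `u * of s * v`. -/

open FreeMonoid

namespace FreeMonoid

theorem map_of_eq_one_of_mem {α M : Type*} [LeftCancelMonoid M] [Subsingleton Mˣ]
    (f : FreeMonoid α →* M) {x : FreeMonoid α} (hx : f x = 1) {a : α} (ha : a ∈ x) :
    f (of a) = 1 := by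
  induction x using FreeMonoid.inductionOn' with
  | one => exact absurd ha List.not_mem_nil
  | of_mul b x ih =>
    rw [map_mul, LeftCancelMonoid.mul_eq_one] at hx
    rcases mem_mul.mp ha with hab | hax
    · exact mem_of.mp hab ▸ hx.1
    · exact ih hx.2 hax

end FreeMonoid

theorem idempotent_fixes_image_generator_general {S : Type u} [DecidableEq S]
    (h : FreeMonoid S →* FreeMonoid S)
    (s : S) (u v : FreeMonoid S)
    (hs : h (of s) = u * of s * v) (hu : h u = 1) (hv : h v = 1) :
    h (h (of s)) = h (of s) ∧ (h (of s)).toList.count s = 1 := by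
  have hs_ne_one : h (of s) ≠ 1 := by
    intro hs_one
    have hs_mem : s ∈ h (of s) := by
      rw [hs]
      exact mem_mul.mpr (Or.inl (mem_mul.mpr (Or.inr mem_of_self)))
    rw [hs_one] at hs_mem
    exact List.not_mem_nil hs_mem
  have hs_notMem_u : s ∉ u := fun hsu => hs_ne_one (map_of_eq_one_of_mem h hu hsu)
  have hs_notMem_v : s ∉ v := fun hsv => hs_ne_one (map_of_eq_one_of_mem h hv hsv)
  constructor
  · calc h (h (of s)) = h (u * of s * v) := congrArg h hs
      _ = h (of s) := by rw [map_mul, map_mul, hu, hv, one_mul, mul_one]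
  · rw [hs, toList_mul, toList_mul, List.count_append, List.count_append,
      List.count_eq_zero.mpr (show s ∉ u.toList from hs_notMem_u),
      List.count_eq_zero.mpr (show s ∉ v.toList from hs_notMem_v)]
    simp

theorem idempotent_fixes_image_generator {S : Type u} [DecidableEq S]
    (h : FreeMonoid S →* FreeMonoid S) (hidem : ∀ x, h (h x) = h x)
    (s : S) (u v : FreeMonoid S)
    (hs : h (of s) = u * of s * v) (hu : h u = 1) (hv : h v = 1) :
    h (h (of s)) = h (of s) ∧ (h (of s)).toList.count s = 1 :=
  idempotent_fixes_image_generator_general h s u v hs hu hv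
end

section
/- Let h be an idempotent endomorphism of the free monoid M = FreeMonoid S. Define S₀ = {s ∈ S : h(of s) = 1} and S₁ = {s ∈ S : the word h(of s) contains exactly one occurrence of some letter not in S₀, namely s itself occurs once and every other letter of h(of s) lies in S₀}. Then for every x ∈ M, the element h(x) lies in the submonoid of M generated by {of s : s ∈ S₀ ∪ S₁}. -/
/-! Let `π` erase the letters killed by `h` (the letters of `S₀`). Then `h ∘ π = h`, so
`k = π ∘ h` is again idempotent, and `k (of t) ≠ 1` whenever `h (of t) ≠ 1`, since otherwise
`h (of t) = h (π (h (of t))) = 1`. A word `w = k x` is fixed by `k` and no letter of `w` is sent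
to `1`; comparing the length of `w` with that of `k w` shows that `k (of t) = of t` for each letter
`t` of `w`, which says precisely that `t ∈ S₁`. -/

open FreeMonoid

theorem List.length_le_length_flatMap {α β : Type*} {F : α → List β} :
    ∀ {l : List α}, (∀ a ∈ l, F a ≠ []) → l.length ≤ (l.flatMap F).length
  | [], _ => by simp
  | a :: l, hne => by
    have := List.length_pos_iff.2 (hne a List.mem_cons_self)
    have := List.length_le_length_flatMap fun b hb => hne b (List.mem_cons_of_mem a hb)
    simp only [List.flatMap_cons, List.length_append, List.length_cons]
    omega

theorem List.eq_singleton_of_flatMap_eq_self {α : Type*} {F : α → List α} :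
    ∀ {l : List α}, (∀ a ∈ l, F a ≠ []) → l.flatMap F = l → ∀ a ∈ l, F a = [a]
  | [], _, _ => by simp
  | a :: l, hne, hl => by
    have hne' : ∀ b ∈ l, F b ≠ [] := fun b hb => hne b (List.mem_cons_of_mem a hb)
    rw [List.flatMap_cons] at hl
    obtain ⟨b, rest, hFa⟩ := List.exists_cons_of_ne_nil (hne a List.mem_cons_self)
    rw [hFa, List.cons_append, List.cons.injEq] at hl
    obtain ⟨rfl, hl⟩ := hl
    have hrest : rest = [] := by
      have := congrArg List.length hl
      have := List.length_le_length_flatMap hne'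
      simp only [List.length_append] at *
      exact List.eq_nil_of_length_eq_zero (by omega)
    rw [hrest, List.nil_append] at hl
    rintro c (_ | ⟨_, hc⟩)
    · rw [hFa, hrest]
    · exact List.eq_singleton_of_flatMap_eq_self hne' hl c hc

namespace FreeMonoid

variable {α : Type*}

theorem toList_apply_eq_flatMap {β : Type*} (f : FreeMonoid α →* FreeMonoid β)
    (w : FreeMonoid α) :
    toList (f w) = w.toList.flatMap fun t => toList (f (of t)) := by
  conv_lhs => rw [← lift_restrict f, lift_apply, toList_prod, List.map_map]
  rw [List.flatMap_def]
  rfl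

theorem apply_of_eq_of_of_apply_eq_self {k : FreeMonoid α →* FreeMonoid α} {w : FreeMonoid α}
    (hw : k w = w) (hne : ∀ t ∈ w, k (of t) ≠ 1) : ∀ t ∈ w, k (of t) = of t := by
  intro t ht
  apply toList.injective
  refine List.eq_singleton_of_flatMap_eq_self (F := fun a => toList (k (of a))) (l := toList w)
    (fun a ha => ?_) ?_ t ht
  · exact fun h0 => hne a ha (toList.injective h0)
  · rw [← toList_apply_eq_flatMap, hw]

open Classical in
noncomputable def eraseLetters (K : Set α) : FreeMonoid α →* FreeMonoid α :=
  lift fun t => if t ∈ K then 1 else of t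

variable {K : Set α}

open Classical in
theorem toList_eraseLetters (w : FreeMonoid α) :
    toList (eraseLetters K w) = w.toList.filter (· ∉ K) := by
  rw [toList_apply_eq_flatMap]
  induction w.toList with
  | nil => rfl
  | cons a l ih =>
    rw [List.flatMap_cons, ih, List.filter_cons]
    by_cases ha : a ∈ K <;> simp [eraseLetters, ha]

theorem mem_eraseLetters {t : α} {w : FreeMonoid α} :
    t ∈ eraseLetters K w ↔ t ∈ w ∧ t ∉ K := by
  classical
  change t ∈ toList (eraseLetters K w) ↔ t ∈ toList w ∧ t ∉ K
  rw [toList_eraseLetters, List.mem_filter, decide_eq_true_iff]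

theorem count_eraseLetters [DecidableEq α] {t : α} (ht : t ∉ K) (w : FreeMonoid α) :
    (eraseLetters K w).toList.count t = w.toList.count t := by
  classical
  rw [toList_eraseLetters, List.count_filter (by simpa using ht)]

theorem comp_eraseLetters {β : Type*} [Monoid β] {f : FreeMonoid α →* β}
    (hK : ∀ t ∈ K, f (of t) = 1) : f.comp (eraseLetters K) = f :=
  hom_eq fun t => by by_cases ht : t ∈ K <;> simp [eraseLetters, ht, hK]

theorem count_eq_of_eraseLetters_eq_of [DecidableEq α] {w : FreeMonoid α} {t : α}
    (hw : eraseLetters K w = of t) (ht : t ∉ K) :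
    w.toList.count t = 1 ∧ ∀ t' ∉ K, t' ≠ t → w.toList.count t' = 0 := by
  refine ⟨?_, fun t' ht' hne => ?_⟩
  · rw [← count_eraseLetters ht, hw, toList_of, List.count_singleton_self]
  · rw [← count_eraseLetters ht', hw, toList_of, List.count_eq_zero, List.mem_singleton]
    exact hne

theorem apply_eraseLetters_kernel {M : Type*} [Monoid M] (f : FreeMonoid α →* M)
    (w : FreeMonoid α) : f (eraseLetters {t | f (of t) = 1} w) = f w :=
  DFunLike.congr_fun (comp_eraseLetters fun _ ht => ht) w

section Idempotent

variable {h : FreeMonoid α →* FreeMonoid α}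

theorem eraseLetters_kernel_apply_of_ne_one (hidem : ∀ x, h (h x) = h x) {t : α}
    (ht : h (of t) ≠ 1) : eraseLetters {t | h (of t) = 1} (h (of t)) ≠ 1 := fun h1 =>
  ht <| by rw [← hidem, ← apply_eraseLetters_kernel, h1, map_one]

theorem eraseLetters_kernel_apply_of_of_mem (hidem : ∀ x, h (h x) = h x) {x : FreeMonoid α}
    {t : α} (hx : t ∈ h x) (ht : h (of t) ≠ 1) :
    eraseLetters {t | h (of t) = 1} (h (of t)) = of t :=
  apply_of_eq_of_of_apply_eq_self (k := (eraseLetters {t | h (of t) = 1}).comp h)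
    (w := eraseLetters {t | h (of t) = 1} (h x))
    (by rw [MonoidHom.comp_apply, apply_eraseLetters_kernel, hidem])
    (fun _ ha => eraseLetters_kernel_apply_of_ne_one hidem (mem_eraseLetters.1 ha).2) t
    (mem_eraseLetters.2 ⟨hx, ht⟩)

end Idempotent

theorem mem_closure_image_of {A : Set α} {w : FreeMonoid α} (hw : ∀ t ∈ w, t ∈ A) :
    w ∈ Submonoid.closure (of '' A) := by
  induction w using FreeMonoid.inductionOn' with
  | one => exact one_mem _
  | of_mul x xs ih =>
    exact mul_mem (Submonoid.subset_closure ⟨x, hw x (mem_mul.2 (.inl mem_of_self)), rfl⟩)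
      (ih fun t ht => hw t (mem_mul.2 (.inr ht)))

end FreeMonoid

theorem image_in_closure_of_S0_S1 {S : Type u} [DecidableEq S]
    (h : FreeMonoid S →* FreeMonoid S) (hidem : ∀ x, h (h x) = h x)
    (S0 S1 : Set S)
    (hS0 : S0 = {s : S | h (of s) = 1})
    (hS1 : S1 = {s : S | (h (of s)).toList.count s = 1 ∧
      ∀ t : S, t ∉ S0 → t ≠ s → (h (of s)).toList.count t = 0}) :
    ∀ x : FreeMonoid S,
      h x ∈ Submonoid.closure (FreeMonoid.of '' (S0 ∪ S1)) := by
  subst hS0 hS1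
  intro x
  refine mem_closure_image_of fun t ht => ?_
  by_cases hkill : h (of t) = 1
  · exact Or.inl hkill
  · exact Or.inr <| count_eq_of_eraseLetters_eq_of
      (eraseLetters_kernel_apply_of_of_mem hidem ht hkill) hkill
end

section
/- The full subcategory of the category of monoids whose objects are the free monoids is Cauchy-complete: every idempotent endomorphism h : FreeMonoid S → FreeMonoid S (with h ∘ h = h) splits through a free monoid, i.e., there exist a set T and monoid homomorphisms r : FreeMonoid S → FreeMonoid T and u : FreeMonoid T → FreeMonoid S with u ∘ r = h and r ∘ u = id. -/
/-!
The fixed points of an idempotent `h` form the submonoid `M = range h`, which is left unitary: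
if `a` and `a * c` are fixed then `a * h c = h (a * c) = a * c`, so `c` is fixed. In a free
monoid, the irreducible elements of a left unitary submonoid `M` freely generate it. Every element
of `M` is a product of irreducibles by induction on length; and two factorizations
`t * y = t' * y'` into irreducibles begin with the same factor, because one of `t`, `t'` is a
prefix of the other, say `t' = t * c`, unitarity puts `c` in `M`, and irreducibility of `t'`
forces `c = 1`. Hence `M ≃* FreeMonoid T` for `T` the irreducibles of `M`, and `h` splits as
`FreeMonoid S → M ≃* FreeMonoid T → FreeMonoid S`.
-/

namespace FreeMonoid

variable {S : Type*}

theorem mul_eq_mul_iff {a b c d : FreeMonoid S} :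
    a * b = c * d ↔ (∃ e, c = a * e ∧ b = e * d) ∨ ∃ e, a = c * e ∧ d = e * b := by
  simpa only [← toList.injective.eq_iff, toList_mul, toList.surjective.exists] using
    List.append_eq_append_iff

theorem length_lt_length_mul_left {a b : FreeMonoid S} (ha : a ≠ 1) :
    b.length < (a * b).length := by
  rw [length_mul, Nat.lt_add_left_iff_pos, Nat.pos_iff_ne_zero, Ne, length_eq_zero]
  exact ha

theorem length_lt_length_mul_right {a b : FreeMonoid S} (hb : b ≠ 1) :
    a.length < (a * b).length := by
  rw [length_mul, Nat.lt_add_right_iff_pos, Nat.pos_iff_ne_zero, Ne, length_eq_zero]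
  exact hb

end FreeMonoid

namespace Submonoid

variable {G : Type*} [Monoid G]

def IsLeftUnitary (M : Submonoid G) : Prop :=
  ∀ ⦃a c : G⦄, a ∈ M → a * c ∈ M → c ∈ M

end Submonoid

namespace MonoidHom

section Idempotent

variable {G : Type*} [Monoid G] {h : G →* G}

theorem apply_eq_self_of_mem_mrange (hidem : h.comp h = h) {x : G} (hx : x ∈ mrange h) :
    h x = x := by
  obtain ⟨y, rfl⟩ := hx
  exact DFunLike.congr_fun hidem y

theorem mrangeRestrict_coe (hidem : h.comp h = h) (x : mrange h) : h.mrangeRestrict x = x :=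
  Subtype.ext (apply_eq_self_of_mem_mrange hidem x.2)

end Idempotent

theorem isLeftUnitary_mrange {G : Type*} [LeftCancelMonoid G] {h : G →* G}
    (hidem : h.comp h = h) : (mrange h).IsLeftUnitary := by
  intro a c ha hac
  have hfix : ∀ {x}, x ∈ mrange h → h x = x := apply_eq_self_of_mem_mrange hidem
  refine ⟨c, mul_left_cancel (a := a) ?_⟩
  rw [← hfix ha, ← map_mul, hfix ha, hfix hac]

end MonoidHom

namespace Submonoid

variable {S : Type*} (M : Submonoid (FreeMonoid S))

instance : Subsingleton Mˣ := (Units.map_injective M.subtype_injective).subsingleton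

noncomputable def irreducibleLift : FreeMonoid {x : M // Irreducible x} →* M :=
  FreeMonoid.lift Subtype.val

theorem irreducibleLift_surjective : Function.Surjective M.irreducibleLift := by
  intro x
  induction hn : (x : FreeMonoid S).length using Nat.strong_induction_on generalizing x with
  | _ n ih =>
  by_cases hx : Irreducible x
  · exact ⟨.of ⟨x, hx⟩, rfl⟩
  obtain rfl | hx1 := eq_or_ne x 1
  · exact ⟨1, map_one _⟩
  obtain ⟨a, b, rfl, ha, hb⟩ : ∃ a b, x = a * b ∧ a ≠ 1 ∧ b ≠ 1 := by
    simpa [irreducible_iff, isUnit_iff_eq_one, hx1] using hx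
  rw [coe_mul] at hn
  have ha' : (a : FreeMonoid S) ≠ 1 := by simpa using ha
  have hb' : (b : FreeMonoid S) ≠ 1 := by simpa using hb
  obtain ⟨v, rfl⟩ := ih _ (hn ▸ FreeMonoid.length_lt_length_mul_right hb') a rfl
  obtain ⟨w, rfl⟩ := ih _ (hn ▸ FreeMonoid.length_lt_length_mul_left ha') b rfl
  exact ⟨v * w, map_mul _ _ _⟩

variable {M}

theorem eq_of_irreducible_eq_mul (hM : M.IsLeftUnitary) {t t' : M} (ht : ¬IsUnit t)
    (ht' : Irreducible t') {e : FreeMonoid S} (he : (t' : FreeMonoid S) = t * e) : t' = t := by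
  have heM : e ∈ M := hM t.2 (he ▸ t'.2)
  have : t' = t * ⟨e, heM⟩ := Subtype.ext he
  rw [this, isUnit_iff_eq_one.mp ((ht'.isUnit_or_isUnit this).resolve_left ht), mul_one]

theorem eq_of_irreducible_mul_eq_mul (hM : M.IsLeftUnitary) {t t' y y' : M}
    (ht : Irreducible t) (ht' : Irreducible t') (h : t * y = t' * y') : t = t' := by
  rcases FreeMonoid.mul_eq_mul_iff.mp (congrArg Subtype.val h) with ⟨e, he, -⟩ | ⟨e, he, -⟩
  · exact (eq_of_irreducible_eq_mul hM ht.not_isUnit ht' he).symm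
  · exact eq_of_irreducible_eq_mul hM ht'.not_isUnit ht he

theorem irreducible_mul_ne_one (t : {x : M // Irreducible x}) (x : M) : (t : M) * x ≠ 1 := fun h =>
  t.2.ne_one (Subtype.ext (mul_eq_one'.mp (congrArg Subtype.val h)).1)

theorem irreducibleLift_injective (hM : M.IsLeftUnitary) :
    Function.Injective M.irreducibleLift := by
  intro v
  induction v using FreeMonoid.inductionOn' with
  | one =>
    intro w hw
    cases w with
    | one => rfl
    | of_mul t w =>
      rw [map_one, map_mul] at hw
      exact absurd hw.symm (irreducible_mul_ne_one t _)
  | of_mul t v ih =>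
    intro w hw
    cases w with
    | one =>
      rw [map_one, map_mul] at hw
      exact absurd hw (irreducible_mul_ne_one t _)
    | of_mul t' w =>
      rw [map_mul, map_mul] at hw
      obtain rfl : t = t' := Subtype.ext (eq_of_irreducible_mul_eq_mul hM t.2 t'.2 hw)
      rw [ih (mul_left_cancel hw)]

noncomputable def irreducibleEquiv (hM : M.IsLeftUnitary) :
    FreeMonoid {x : M // Irreducible x} ≃* M :=
  MulEquiv.ofBijective M.irreducibleLift
    ⟨irreducibleLift_injective hM, M.irreducibleLift_surjective⟩

end Submonoid

theorem freeMonoids_cauchy_complete {S : Type}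
    (h : FreeMonoid S →* FreeMonoid S) (hidem : h.comp h = h) :
    ∃ (T : Type) (r : FreeMonoid S →* FreeMonoid T)
      (u : FreeMonoid T →* FreeMonoid S),
      u.comp r = h ∧ r.comp u = MonoidHom.id (FreeMonoid T) := by
  let e := Submonoid.irreducibleEquiv (MonoidHom.isLeftUnitary_mrange hidem)
  refine ⟨_, e.symm.toMonoidHom.comp h.mrangeRestrict,
    (MonoidHom.mrange h).subtype.comp e.toMonoidHom, ?_, ?_⟩
  · ext s
    simp
  · ext t
    simp [MonoidHom.mrangeRestrict_coe hidem]
end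

section
/- Let h be an idempotent endomorphism of the free monoid on S, and let w be a word in the image of h. Write the letters of w not sent to 1 by h∘of as α_1, …, α_p (with multiplicity). Then for each i, the word h(of α_i) contains exactly one occurrence of a letter not sent to 1 by h∘of. -/
/-!
Let `p t` say that `h` does not erase the letter `t`. Expanding `h w = w` letter by letter counts
the `p`-letters of `w` as the sum, over the letters `a` of `w`, of the number of `p`-letters of
`h (of a)`. Idempotence makes every summand at least `1` when `p a` holds: were all letters of
`h (of a)` erased, `h (of a) = h (h (of a))` would be `1`. A sum of termwise upper bounds that is
equal to the sum it bounds is attained termwise, so each such `h (of a)` has exactly one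
`p`-letter.
-/

open FreeMonoid

instance freeMonoidDecEq {S : Type u} [DecidableEq S] : DecidableEq (FreeMonoid S) :=
  inferInstanceAs (DecidableEq (List S))

theorem List.eq_of_sum_map_eq_of_forall_le {ι M : Type*} [AddCommMonoid M] [PartialOrder M]
    [IsOrderedCancelAddMonoid M] {l : List ι} {f g : ι → M} (hle : ∀ i ∈ l, f i ≤ g i)
    (hsum : (l.map f).sum = (l.map g).sum) : ∀ i ∈ l, f i = g i := by
  by_contra! hne
  obtain ⟨i, hi, hfg⟩ := hne
  exact (List.sum_lt_sum f g hle ⟨i, hi, lt_of_le_of_ne (hle i hi) hfg⟩).ne hsum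

namespace FreeMonoid

variable {α β M : Type*}

theorem map_eq_one_of_forall_mem_toList [Monoid M] (f : FreeMonoid α →* M) {u : FreeMonoid α}
    (hu : ∀ t ∈ u.toList, f (of t) = 1) : f u = 1 := by
  rw [← lift_restrict f, lift_apply]
  exact List.prod_eq_one (by simpa using hu)

theorem countP_toList_map (f : FreeMonoid α →* FreeMonoid β) (p : β → Bool) (u : FreeMonoid α) :
    (f u).toList.countP p = (u.toList.map fun a => (f (of a)).toList.countP p).sum := by
  conv_lhs => rw [← lift_restrict f, lift_apply]
  rw [toList_prod, List.countP_flatten, List.map_map, List.map_map]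
  rfl

theorem countP_toList_of_le_of_idempotent [DecidableEq α] {h : FreeMonoid α →* FreeMonoid α}
    (hidem : ∀ x, h (h x) = h x) (a : α) :
    (of a).toList.countP (fun t => decide (h (of t) ≠ 1))
      ≤ (h (of a)).toList.countP (fun t => decide (h (of t) ≠ 1)) := by
  by_cases ha : h (of a) = 1
  · simp [ha]
  · have hkept : ∃ t ∈ (h (of a)).toList, h (of t) ≠ 1 := by
      by_contra! herased
      exact ha (hidem (of a) ▸ map_eq_one_of_forall_mem_toList h herased)
    simpa [ha, Nat.one_le_iff_ne_zero, List.countP_eq_zero] using hkept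

end FreeMonoid

theorem image_letters_single_occurrence {S : Type u} [DecidableEq S]
    (h : FreeMonoid S →* FreeMonoid S) (hidem : ∀ x, h (h x) = h x)
    (w : FreeMonoid S) (hw : ∃ x, h x = w) :
    ∀ a ∈ w.toList, h (of a) ≠ 1 →
      ((h (of a)).toList.countP (fun t => decide (h (of t) ≠ 1))) = 1 := by
  set p : S → Bool := fun t => decide (h (of t) ≠ 1)
  have hfix : h w = w := by
    obtain ⟨x, rfl⟩ := hw
    exact hidem x
  have hsum : (w.toList.map fun a => (of a).toList.countP p).sum
      = (w.toList.map fun a => (h (of a)).toList.countP p).sum := by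
    rw [← countP_toList_map h, hfix]
    exact (countP_toList_map (MonoidHom.id _) p w).symm
  intro a ha hne
  have hterm := List.eq_of_sum_map_eq_of_forall_le
    (fun b _ => countP_toList_of_le_of_idempotent hidem b) hsum a ha
  simpa [p, hne] using hterm.symm
end

section
/- Let C be a category with an initial object 0, let TrivFib be a class of morphisms of C, and call an object X cofibrant if 0 → X is left-orthogonal to every member of TrivFib. Suppose every object c admits a morphism p : d → c in TrivFib with d belonging to a fixed full subcategory D that is closed under splitting of idempotents. Then every cofibrant object of C is isomorphic to an object of D. -/
open CategoryTheory CategoryTheory.Limits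

theorem cofibrant_iso_to_subcat {C : Type u} [Category.{v} C] [HasInitial C]
    (TrivFib : MorphismProperty C) (D : Set C)
    (hD : ∀ d ∈ D, ∀ (h : d ⟶ d), h ≫ h = h →
      ∃ e ∈ D, ∃ (r : d ⟶ e) (s : e ⟶ d), r ≫ s = h ∧ s ≫ r = 𝟙 e)
    (hres : ∀ c : C, ∃ d ∈ D, ∃ p : d ⟶ c, TrivFib p)
    (c : C)
    (hc : ∀ {X Y : C} (g : X ⟶ Y), TrivFib g →
      HasLiftingProperty (initial.to c) g) :
    ∃ e ∈ D, Nonempty (c ≅ e) := by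
  obtain ⟨d, hd, p, hp⟩ := hres c
  haveI := hc p hp
  have sq : CommSq (initial.to d) (initial.to c) p (𝟙 c) := ⟨by simp⟩
  obtain ⟨⟨q, -, hq⟩⟩ := (HasLiftingProperty.sq_hasLift sq).exists_lift
  -- hq : q ≫ p = 𝟙 c
  have hidem : (p ≫ q) ≫ (p ≫ q) = p ≫ q := by
    simp only [Category.assoc]
    rw [← Category.assoc q p, hq, Category.id_comp]
  obtain ⟨e, he, r, s, hrs, hsr⟩ := hD d hd (p ≫ q) hidem
  refine ⟨e, he, ⟨⟨q ≫ r, s ≫ p, ?_, ?_⟩⟩⟩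
  · rw [Category.assoc, ← Category.assoc r s, hrs, ← Category.assoc,
      ← Category.assoc, hq, Category.id_comp, hq]
  · rw [Category.assoc, ← Category.assoc p q, ← hrs, ← Category.assoc,
      ← Category.assoc, hsr, Category.id_comp, hsr]
end

section
/- Let h be an idempotent endomorphism of the free monoid M on S. Let T = {h(of s) : s ∈ S, h(of s) contains exactly one occurrence of s and all its other letters t satisfy h(of t) = 1}. Then the monoid homomorphism u : FreeMonoid T → M induced by the inclusion T ⊆ M satisfies h ∘ u = u. -/
open FreeMonoid

theorem generators_fixed_by_idempotent {S : Type} [DecidableEq S]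
    (h : FreeMonoid S →* FreeMonoid S) (hidem : ∀ x, h (h x) = h x)
    (T : Set (FreeMonoid S))
    (hT : T = {w : FreeMonoid S | ∃ s : S, w = h (of s) ∧
      w.toList.count s = 1 ∧ ∀ t ∈ w.toList, t ≠ s → h (of t) = 1}) :
    h.comp (FreeMonoid.lift (fun w : T => (w : FreeMonoid S))) =
      FreeMonoid.lift (fun w : T => (w : FreeMonoid S)) := by
  subst hT
  apply FreeMonoid.hom_eq
  intro w
  simp only [MonoidHom.comp_apply, FreeMonoid.lift_eval_of]
  obtain ⟨s, hs, -, -⟩ := w.2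
  rw [hs, hidem]
end
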